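/- For any uncertainty frame F = ⟨W, μ⟩: F validates the formula cap, i.e., B⊤ ∧ ~_G B⊥ (where ⊤ is a classical tautology and ⊥ a classical contradiction), if and only if μ is a capacity, i.e., μ(W) = 1 and μ(∅) = 0. -/

import Mathlib

/-- Classical propositional formulas (over `~` and `∧`). -/
inductive CPForm : Type
  | atom : ℕ → CPForm
  | neg  : CPForm → CPForm
  | and  : CPForm → CPForm → CPForm

/-- Boolean evaluation of classical formulas. -/
def cpeval (v : ℕ → Bool) : CPForm → Bool
  | .atom n => v n
  | .neg φ => !(cpeval v φ)
  | .and φ ψ => cpeval v φ && cpeval v ψ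

/-- `φ` is a classical tautology. -/
def CPTaut (φ : CPForm) : Prop := ∀ v : ℕ → Bool, cpeval v φ = true

/-- The extension `‖φ‖` of a classical formula in a model with valuation `v`. -/
def cpset {W : Type} (v : ℕ → Set W) : CPForm → Set W
  | .atom n => v n
  | .neg φ => (cpset v φ)ᶜ
  | .and φ ψ => cpset v φ ∩ cpset v ψ

/-- Defined classical implication `φ ⊃ ψ := ~(φ ∧ ~ψ)`. -/
def cpImp (φ ψ : CPForm) : CPForm := (φ.and ψ.neg).neg

/-- Defined classical disjunction `φ ∨ ψ := ~(~φ ∧ ~ψ)`. -/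
def cpOr (φ ψ : CPForm) : CPForm := ((φ.neg).and ψ.neg).neg

/-- A classical contradiction `p ∧ ~p`. -/
def cpBot : CPForm := (CPForm.atom 0).and (CPForm.atom 0).neg

/-- A classical tautology `~(p ∧ ~p)`. -/
def cpTop : CPForm := cpBot.neg

/-- Formulas of the language `L_QG`: atoms `B φ` for classical `φ`,
closed under `∧`, `∨`, `→_G`, `⤙_G`. -/
inductive QGForm : Type
  | bel   : CPForm → QGForm
  | and   : QGForm → QGForm → QGForm
  | or    : QGForm → QGForm → QGForm
  | imp   : QGForm → QGForm → QGForm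
  | coimp : QGForm → QGForm → QGForm

/-- Gödel implication on `[0,1] ⊆ ℝ`. -/
noncomputable def gimp (a b : ℝ) : ℝ := if a ≤ b then 1 else b

/-- Gödel co-implication on `[0,1] ⊆ ℝ`. -/
noncomputable def gcoimp (a b : ℝ) : ℝ := if a ≤ b then 0 else a

/-- The bi-Gödel valuation of `L_QG` formulas in a QG model given by measure `μ`
and classical valuation `v`: `e(Bφ) = μ(‖φ‖)`. -/
noncomputable def qgeval {W : Type} (μ : Set W → ℝ) (v : ℕ → Set W) : QGForm → ℝ
  | .bel φ => μ (cpset v φ)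
  | .and α β => min (qgeval μ v α) (qgeval μ v β)
  | .or α β => max (qgeval μ v α) (qgeval μ v β)
  | .imp α β => gimp (qgeval μ v α) (qgeval μ v β)
  | .coimp α β => gcoimp (qgeval μ v α) (qgeval μ v β)

/-- `μ` is an uncertainty measure on `W`: `[0,1]`-valued, monotone w.r.t. `⊆`,
and `μ(W) > μ(∅)`. -/
def IsUncertainty {W : Type} (μ : Set W → ℝ) : Prop :=
  (∀ X : Set W, μ X ∈ Set.Icc (0:ℝ) 1) ∧ Monotone μ ∧ μ ∅ < μ Set.univ

/-- `⊤_G` in `L_QG`. -/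
def qTop : QGForm := (QGForm.bel (CPForm.atom 0)).imp (QGForm.bel (CPForm.atom 0))
/-- `⊥_G` in `L_QG`. -/
def qBot : QGForm := (QGForm.bel (CPForm.atom 0)).coimp (QGForm.bel (CPForm.atom 0))
/-- Gödel negation `~_G α := α →_G ⊥_G`. -/
def qNot (α : QGForm) : QGForm := α.imp qBot
/-- `△α := (⊤_G ⤙_G α) →_G ⊥_G`. -/
def qDelta (α : QGForm) : QGForm := (qTop.coimp α).imp qBot
/-- `α ↔_G β := (α →_G β) ∧ (β →_G α)`. -/
def qIff (α β : QGForm) : QGForm := (α.imp β).and (β.imp α)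

/-- Validity of an `L_QG` formula on an uncertainty frame `⟨W, μ⟩`:
value `1` in every QG model on the frame. -/
def QGValidOnFrame {W : Type} (μ : Set W → ℝ) (α : QGForm) : Prop :=
  ∀ v : ℕ → Set W, qgeval μ v α = 1

/-- The formula `cap`: `B⊤ ∧ ~_G B⊥` for a classical tautology `⊤ := ~(p∧~p)` and
classical contradiction `⊥ := p∧~p`. -/
def capForm : QGForm := (QGForm.bel cpTop).and (qNot (QGForm.bel cpBot))

theorem gimp_zero_eq_one_iff {b : ℝ} (hb : 0 ≤ b) : gimp b 0 = 1 ↔ b = 0 := by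
  unfold gimp
  split_ifs with h
  · simpa using le_antisymm h hb
  · simpa using (h ·.le)

theorem gimp_zero_le_one (b : ℝ) : gimp b 0 ≤ 1 := by
  unfold gimp
  split_ifs <;> norm_num

theorem min_eq_one_iff {a c : ℝ} (ha : a ≤ 1) (hc : c ≤ 1) : min a c = 1 ↔ a = 1 ∧ c = 1 := by
  constructor
  · intro h
    constructor <;> linarith [min_le_left a c, min_le_right a c]
  · rintro ⟨rfl, rfl⟩
    exact min_self 1

section Evaluation

variable {W : Type} (μ : Set W → ℝ) (v : ℕ → Set W)

@[simp]
theorem cpset_cpBot : cpset v cpBot = ∅ := by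
  simp [cpBot, cpset]

@[simp]
theorem cpset_cpTop : cpset v cpTop = Set.univ := by
  simp [cpTop, cpset]

@[simp]
theorem qgeval_qBot : qgeval μ v qBot = 0 := by
  simp [qBot, qgeval, gcoimp]

theorem qgeval_capForm : qgeval μ v capForm = min (μ Set.univ) (gimp (μ ∅) 0) := by
  simp [capForm, qNot, qgeval]

end Evaluation

theorem cap_correspondence_general (W : Type) (μ : Set W → ℝ)
    (hμ : IsUncertainty μ) :
    QGValidOnFrame μ capForm ↔ (μ Set.univ = 1 ∧ μ ∅ = 0) := by
  have hbounds := hμ.1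
  simp only [QGValidOnFrame, qgeval_capForm, forall_const]
  rw [min_eq_one_iff (hbounds _).2 (gimp_zero_le_one _), gimp_zero_eq_one_iff (hbounds _).1]

/-- an uncertainty frame validates `cap` iff `μ` is a capacity,
i.e., `μ(W) = 1` and `μ(∅) = 0`. -/
theorem cap_correspondence (W : Type) (_ : Nonempty W) (μ : Set W → ℝ)
    (hμ : IsUncertainty μ) :
    QGValidOnFrame μ capForm ↔ (μ Set.univ = 1 ∧ μ ∅ = 0) :=
  cap_correspondence_general W μ hμ
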